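/- Let 0 ≤ x^lo < x^up and y^lo < y^up be reals, and let g : ℝ → ℝ be continuous and convex on [y^lo, y^up]. Define S = {(x, y, z, u) ∈ [x^lo, x^up] × [y^lo, y^up] × ℝ × ℝ : u = x·y and z = x·g(y)}. Then the convex hull of S equals the set of (x, y, z, u) ∈ ℝ^4 satisfying: z ≥ x^lo·g*((x^up − x)/(x^up − x^lo), (x^up·y − u)/(x^up − x^lo)) + x^up·g*((x − x^lo)/(x^up − x^lo), (u − x^lo·y)/(x^up − x^lo)); z ≤ g(y^lo)·x + ((g(y^up) − g(y^lo))/(y^up − y^lo))·(u − y^lo·x); (x^up − x)·y^lo ≤ x^up·y − u ≤ (x^up − x)·y^up; and (x − x^lo)·y^lo ≤ u − x^lo·y ≤ (x − x^lo)·y^up. -/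

import Mathlib

/-!
Write `Δ = xup - xlo` and `λ = (xup - x) / Δ`. The linear constraints say exactly that
`(λ, (xup * y - u) / Δ)` and `(1 - λ, (u - xlo * y) / Δ)` lie in the cone
`{(l, t) | 0 ≤ l, l * ylo ≤ t ≤ l * yup}`, i.e. equal `(λ, λ * y₁)` and `(1 - λ, (1 - λ) * y₂)`
for some `y₁, y₂ ∈ [ylo, yup]`. The perspective of a convex function is convex on that cone, so
the right-hand side is convex; it contains the graph, hence the hull. Conversely the lower bound
is the height of `λ • (xlo, y₁, xlo * g y₁, xlo * y₁) + (1 - λ) • (xup, y₂, xup * g y₂, xup * y₂)`,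
a combination of graph points with the same `x, y, u`. Exchanging the roles of `x` and `y`,
graph points over the edges `y = ylo` and `y = yup` reach the secant bound, and every admissible
`z` lies on the segment between these two points of the hull.
-/

/-- The (totalized) perspective function of `g`: `g*(l, t) = l·g(t/l)` for `l > 0`, and
`0` at `l = 0` (consistent with `g*(0,0) = 0`). On the feasible region of Corollary 9
the remaining constraints force `(l, t)` into the domain of the perspective, so this
total extension agrees with the paper's partial definition there. -/
noncomputable def persp (g : ℝ → ℝ) (l t : ℝ) : ℝ :=
  if 0 < l then l * g (t / l) else 0

open Set

lemma persp_of_pos (g : ℝ → ℝ) {l : ℝ} (hl : 0 < l) (t : ℝ) : persp g l t = l * g (t / l) :=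
  if_pos hl

lemma persp_mul (g : ℝ → ℝ) {l : ℝ} (hl : 0 ≤ l) (y : ℝ) : persp g l (l * y) = l * g y := by
  rcases hl.eq_or_lt with rfl | hl
  · simp [persp]
  · rw [persp_of_pos g hl, mul_div_cancel_left₀ y hl.ne']

lemma ConvexOn.persp_add_le {g : ℝ → ℝ} {s : Set ℝ} (hg : ConvexOn ℝ s g) {l₁ l₂ y₁ y₂ : ℝ}
    (hl₁ : 0 ≤ l₁) (hl₂ : 0 ≤ l₂) (hy₁ : y₁ ∈ s) (hy₂ : y₂ ∈ s) :
    persp g (l₁ + l₂) (l₁ * y₁ + l₂ * y₂) ≤ l₁ * g y₁ + l₂ * g y₂ := by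
  rcases (add_nonneg hl₁ hl₂).eq_or_lt with hl | hl
  · obtain ⟨rfl, rfl⟩ := (add_eq_zero_iff_of_nonneg hl₁ hl₂).1 hl.symm
    simp [persp]
  have hconv := hg.2 hy₁ hy₂ (div_nonneg hl₁ hl.le) (div_nonneg hl₂ hl.le) (by field_simp)
  simp only [smul_eq_mul] at hconv
  calc persp g (l₁ + l₂) (l₁ * y₁ + l₂ * y₂)
      = (l₁ + l₂) * g (l₁ / (l₁ + l₂) * y₁ + l₂ / (l₁ + l₂) * y₂) := by
        rw [persp_of_pos g hl]; congr 2; field_simp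
    _ ≤ (l₁ + l₂) * (l₁ / (l₁ + l₂) * g y₁ + l₂ / (l₁ + l₂) * g y₂) := by gcongr
    _ = l₁ * g y₁ + l₂ * g y₂ := by field_simp

lemma ConvexOn.le_secant {f : ℝ → ℝ} {s : Set ℝ} (hf : ConvexOn ℝ s f) {a b y : ℝ}
    (ha : a ∈ s) (hb : b ∈ s) (hab : a < b) (hy : y ∈ Icc a b) :
    f y ≤ f a + (f b - f a) / (b - a) * (y - a) := by
  have hba : 0 < b - a := sub_pos.2 hab
  have hconv := hf.2 ha hb (div_nonneg (sub_nonneg.2 hy.2) hba.le)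
    (div_nonneg (sub_nonneg.2 hy.1) hba.le) (by field_simp; ring)
  have harg : (b - y) / (b - a) * a + (y - a) / (b - a) * b = y := by
    field_simp; ring
  simp only [smul_eq_mul, harg] at hconv
  refine hconv.trans_eq ?_
  field_simp
  ring

def perspCone (a b : ℝ) : Set (ℝ × ℝ) := {q | 0 ≤ q.1 ∧ q.1 * a ≤ q.2 ∧ q.2 ≤ q.1 * b}

lemma convex_perspCone (a b : ℝ) : Convex ℝ (perspCone a b) := by
  rintro q ⟨hq, hqa, hqb⟩ r ⟨hr, hra, hrb⟩ μ ν hμ hν -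
  refine ⟨by simp only [Prod.fst_add, Prod.smul_fst, smul_eq_mul]; positivity, ?_, ?_⟩ <;>
  simp only [Prod.fst_add, Prod.snd_add, Prod.smul_fst, Prod.smul_snd, smul_eq_mul] <;>
  nlinarith [mul_le_mul_of_nonneg_left hqa hμ, mul_le_mul_of_nonneg_left hra hν,
    mul_le_mul_of_nonneg_left hqb hμ, mul_le_mul_of_nonneg_left hrb hν]

lemma exists_mem_Icc_eq_mul_of_mem_perspCone {a b : ℝ} (hab : a ≤ b) {q : ℝ × ℝ}
    (hq : q ∈ perspCone a b) : ∃ y ∈ Icc a b, q.2 = q.1 * y := by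
  obtain ⟨hl, hla, hlb⟩ := hq
  rcases hl.eq_or_lt with hl | hl
  · rw [← hl, zero_mul] at hla hlb
    exact ⟨a, left_mem_Icc.2 hab, by rw [← hl]; linarith⟩
  · refine ⟨q.2 / q.1, ⟨?_, ?_⟩, by field_simp⟩
    · rwa [le_div_iff₀ hl, mul_comm]
    · rwa [div_le_iff₀ hl, mul_comm]

lemma mk_div_mem_perspCone_iff {a b l t d : ℝ} (hab : a < b) (hd : 0 < d) :
    (l / d, t / d) ∈ perspCone a b ↔ l * a ≤ t ∧ t ≤ l * b := by
  simp only [perspCone, mem_ofPred_eq, div_mul_eq_mul_div, div_le_div_iff_of_pos_right hd]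
  refine ⟨fun h => h.2, fun h => ⟨div_nonneg ?_ hd.le, h⟩⟩
  nlinarith [h.1.trans h.2]

lemma convexOn_persp {g : ℝ → ℝ} {a b : ℝ} (hab : a ≤ b) (hg : ConvexOn ℝ (Icc a b) g) :
    ConvexOn ℝ (perspCone a b) (fun q => persp g q.1 q.2) := by
  refine ⟨convex_perspCone a b, ?_⟩
  intro q hq r hr μ ν hμ hν _
  obtain ⟨y₁, hy₁, hq₂⟩ := exists_mem_Icc_eq_mul_of_mem_perspCone hab hq
  obtain ⟨y₂, hy₂, hr₂⟩ := exists_mem_Icc_eq_mul_of_mem_perspCone hab hr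
  simp only [Prod.fst_add, Prod.snd_add, Prod.smul_fst, Prod.smul_snd, smul_eq_mul, hq₂, hr₂,
    persp_mul g hq.1, persp_mul g hr.1]
  simpa only [mul_assoc] using hg.persp_add_le (mul_nonneg hμ hq.1) (mul_nonneg hν hr.1) hy₁ hy₂

noncomputable section Envelope

variable (xlo xup ylo yup : ℝ) (g : ℝ → ℝ)

def faceLo : ℝ × ℝ × ℝ × ℝ →ᵃ[ℝ] ℝ × ℝ where
  toFun p := ((xup - p.1) / (xup - xlo), (xup * p.2.1 - p.2.2.2) / (xup - xlo))
  linear :=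
    { toFun := fun v => (-v.1 / (xup - xlo), (xup * v.2.1 - v.2.2.2) / (xup - xlo))
      map_add' := fun v w => by ext <;> simp only [Prod.fst_add, Prod.snd_add] <;> ring
      map_smul' := fun c v => by
        ext <;> simp only [Prod.smul_fst, Prod.smul_snd, smul_eq_mul, RingHom.id_apply] <;> ring }
  map_vadd' p v := by
    ext <;> simp only [vadd_eq_add, Prod.fst_add, Prod.snd_add, LinearMap.coe_mk, AddHom.coe_mk] <;>
      ring

def faceHi : ℝ × ℝ × ℝ × ℝ →ᵃ[ℝ] ℝ × ℝ where
  toFun p := ((p.1 - xlo) / (xup - xlo), (p.2.2.2 - xlo * p.2.1) / (xup - xlo))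
  linear :=
    { toFun := fun v => (v.1 / (xup - xlo), (v.2.2.2 - xlo * v.2.1) / (xup - xlo))
      map_add' := fun v w => by ext <;> simp only [Prod.fst_add, Prod.snd_add] <;> ring
      map_smul' := fun c v => by
        ext <;> simp only [Prod.smul_fst, Prod.smul_snd, smul_eq_mul, RingHom.id_apply] <;> ring }
  map_vadd' p v := by
    ext <;> simp only [vadd_eq_add, Prod.fst_add, Prod.snd_add, LinearMap.coe_mk, AddHom.coe_mk] <;>
      ring

/-- The McCormick inequalities for `u = x * y` on the box `[xlo, xup] × [ylo, yup]`. -/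
def mccormickSet : Set (ℝ × ℝ × ℝ × ℝ) :=
  faceLo xlo xup ⁻¹' perspCone ylo yup ∩ faceHi xlo xup ⁻¹' perspCone ylo yup

def perspBound (p : ℝ × ℝ × ℝ × ℝ) : ℝ :=
  xlo * persp g (faceLo xlo xup p).1 (faceLo xlo xup p).2 +
    xup * persp g (faceHi xlo xup p).1 (faceHi xlo xup p).2

def secantBound (p : ℝ × ℝ × ℝ × ℝ) : ℝ :=
  g ylo * p.1 + ((g yup - g ylo) / (yup - ylo)) * (p.2.2.2 - ylo * p.1)

def graphSet : Set (ℝ × ℝ × ℝ × ℝ) :=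
  {p | p.1 ∈ Icc xlo xup ∧ p.2.1 ∈ Icc ylo yup ∧ p.2.2.2 = p.1 * p.2.1 ∧ p.2.2.1 = p.1 * g p.2.1}

def envelopeSet : Set (ℝ × ℝ × ℝ × ℝ) :=
  {p | perspBound xlo xup g p ≤ p.2.2.1 ∧ p.2.2.1 ≤ secantBound ylo yup g p ∧
    (xup - p.1) * ylo ≤ xup * p.2.1 - p.2.2.2 ∧ xup * p.2.1 - p.2.2.2 ≤ (xup - p.1) * yup ∧
    (p.1 - xlo) * ylo ≤ p.2.2.2 - xlo * p.2.1 ∧ p.2.2.2 - xlo * p.2.1 ≤ (p.1 - xlo) * yup}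

variable {xlo xup ylo yup g}

lemma mem_envelopeSet_iff (hx : xlo < xup) (hy : ylo < yup) {p : ℝ × ℝ × ℝ × ℝ} :
    p ∈ envelopeSet xlo xup ylo yup g ↔
      perspBound xlo xup g p ≤ p.2.2.1 ∧ p.2.2.1 ≤ secantBound ylo yup g p ∧
      p ∈ mccormickSet xlo xup ylo yup := by
  have hd : 0 < xup - xlo := sub_pos.2 hx
  simp only [envelopeSet, mccormickSet, mem_ofPred_eq, mem_inter_iff, mem_preimage, faceLo, faceHi,
    AffineMap.coe_mk, mk_div_mem_perspCone_iff hy hd, and_assoc]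

lemma perspBound_mk_mul (hx : xlo < xup) {x y : ℝ} (hx₁ : xlo ≤ x) (hx₂ : x ≤ xup) (z : ℝ) :
    perspBound xlo xup g (x, y, z, x * y) = x * g y := by
  have hd : 0 < xup - xlo := sub_pos.2 hx
  have hlo : faceLo xlo xup (x, y, z, x * y) =
      ((xup - x) / (xup - xlo), (xup - x) / (xup - xlo) * y) := by
    simp only [faceLo, AffineMap.coe_mk, Prod.mk.injEq, true_and]; ring
  have hhi : faceHi xlo xup (x, y, z, x * y) =
      ((x - xlo) / (xup - xlo), (x - xlo) / (xup - xlo) * y) := by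
    simp only [faceHi, AffineMap.coe_mk, Prod.mk.injEq, true_and]; ring
  rw [perspBound, hlo, hhi, persp_mul g (div_nonneg (sub_nonneg.2 hx₂) hd.le),
    persp_mul g (div_nonneg (sub_nonneg.2 hx₁) hd.le)]
  field_simp
  ring

lemma graphSet_subset_envelopeSet (hx0 : 0 ≤ xlo) (hx : xlo < xup) (hy : ylo < yup)
    (hg : ConvexOn ℝ (Icc ylo yup) g) :
    graphSet xlo xup ylo yup g ⊆ envelopeSet xlo xup ylo yup g := by
  rintro ⟨x, y, z, u⟩ ⟨⟨hx₁, hx₂⟩, hy', hu : u = x * y, hz : z = x * g y⟩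
  subst hu hz
  have hsec := hg.le_secant (left_mem_Icc.2 hy.le) (right_mem_Icc.2 hy.le) hy hy'
  refine ⟨(perspBound_mk_mul hx hx₁ hx₂ _).le, ?_, ?_⟩
  · simp only [secantBound]
    nlinarith [mul_le_mul_of_nonneg_left hsec (hx0.trans hx₁)]
  · obtain ⟨hy₁, hy₂⟩ := hy'
    refine ⟨?_, ?_, ?_, ?_⟩ <;>
    nlinarith [mul_nonneg (sub_nonneg.2 hx₁) (sub_nonneg.2 hy₁),
      mul_nonneg (sub_nonneg.2 hx₁) (sub_nonneg.2 hy₂),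
      mul_nonneg (sub_nonneg.2 hx₂) (sub_nonneg.2 hy₁),
      mul_nonneg (sub_nonneg.2 hx₂) (sub_nonneg.2 hy₂)]

lemma convex_envelopeSet (hx0 : 0 ≤ xlo) (hx : xlo < xup) (hy : ylo < yup)
    (hg : ConvexOn ℝ (Icc ylo yup) g) : Convex ℝ (envelopeSet xlo xup ylo yup g) := by
  have hpersp := convexOn_persp hy.le hg
  have hK : Convex ℝ (mccormickSet xlo xup ylo yup) :=
    (hpersp.1.affine_preimage _).inter (hpersp.1.affine_preimage _)
  have hF : ConvexOn ℝ (mccormickSet xlo xup ylo yup) (perspBound xlo xup g) :=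
    (((hpersp.comp_affineMap _).subset inter_subset_left hK).smul hx0).add
      (((hpersp.comp_affineMap _).subset inter_subset_right hK).smul (hx0.trans hx.le))
  intro p hp q hq a b ha hb hab
  rw [mem_envelopeSet_iff hx hy] at hp hq ⊢
  obtain ⟨hpF, hpG, hpK⟩ := hp
  obtain ⟨hqF, hqG, hqK⟩ := hq
  refine ⟨?_, ?_, hK hpK hqK ha hb hab⟩
  · calc perspBound xlo xup g (a • p + b • q)
        ≤ a • perspBound xlo xup g p + b • perspBound xlo xup g q := hF.2 hpK hqK ha hb hab
      _ ≤ a • p.2.2.1 + b • q.2.2.1 := by gcongr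
  · calc (a • p + b • q).2.2.1 = a * p.2.2.1 + b * q.2.2.1 := rfl
      _ ≤ a * secantBound ylo yup g p + b * secantBound ylo yup g q := by gcongr
      _ = secantBound ylo yup g (a • p + b • q) := by
        simp only [secantBound, Prod.fst_add, Prod.snd_add, Prod.smul_fst, Prod.smul_snd,
          smul_eq_mul]
        ring

lemma mk_mem_graphSet {x y : ℝ} (hx : x ∈ Icc xlo xup) (hy : y ∈ Icc ylo yup) :
    (x, y, x * g y, x * y) ∈ graphSet xlo xup ylo yup g :=
  ⟨hx, hy, rfl, rfl⟩

lemma perspBound_mem_convexHull (hx : xlo < xup) (hy : ylo < yup) {p : ℝ × ℝ × ℝ × ℝ}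
    (hp : p ∈ mccormickSet xlo xup ylo yup) :
    (p.1, p.2.1, perspBound xlo xup g p, p.2.2.2) ∈ convexHull ℝ (graphSet xlo xup ylo yup g) := by
  obtain ⟨x, y, z, u⟩ := p
  have hd : xup - xlo ≠ 0 := (sub_pos.2 hx).ne'
  have hlo : ((xup - x) / (xup - xlo), (xup * y - u) / (xup - xlo)) ∈ perspCone ylo yup := hp.1
  have hhi : ((x - xlo) / (xup - xlo), (u - xlo * y) / (xup - xlo)) ∈ perspCone ylo yup := hp.2
  obtain ⟨y₁, hy₁, ht₁⟩ := exists_mem_Icc_eq_mul_of_mem_perspCone hy.le hlo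
  obtain ⟨y₂, hy₂, ht₂⟩ := exists_mem_Icc_eq_mul_of_mem_perspCone hy.le hhi
  have hcomb := convex_convexHull ℝ (graphSet xlo xup ylo yup g)
    (subset_convexHull ℝ _ (mk_mem_graphSet (g := g) (left_mem_Icc.2 hx.le) hy₁))
    (subset_convexHull ℝ _ (mk_mem_graphSet (g := g) (right_mem_Icc.2 hx.le) hy₂))
    hlo.1 hhi.1 (by field_simp; ring)
  convert hcomb using 1
  simp only [perspBound, faceLo, faceHi, AffineMap.coe_mk, ht₁, ht₂, persp_mul g hlo.1,
    persp_mul g hhi.1, Prod.smul_mk, Prod.mk_add_mk, smul_eq_mul, Prod.mk.injEq]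
  refine ⟨by field_simp; ring, ?_, by ring, ?_⟩
  · rw [← ht₁, ← ht₂]; field_simp; ring
  · rw [mul_left_comm _ xlo, mul_left_comm _ xup, ← ht₁, ← ht₂]; field_simp; ring

lemma secantBound_mem_convexHull (hx : xlo < xup) (hy : ylo < yup) {p : ℝ × ℝ × ℝ × ℝ}
    (hp : p ∈ mccormickSet xlo xup ylo yup) :
    (p.1, p.2.1, secantBound ylo yup g p, p.2.2.2) ∈ convexHull ℝ (graphSet xlo xup ylo yup g) := by
  obtain ⟨x, y, z, u⟩ := p
  have hd : 0 < xup - xlo := sub_pos.2 hx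
  have he : 0 < yup - ylo := sub_pos.2 hy
  obtain ⟨c₃, c₄⟩ := (mk_div_mem_perspCone_iff hy hd).1 hp.1
  obtain ⟨c₅, c₆⟩ := (mk_div_mem_perspCone_iff hy hd).1 hp.2
  have hlo : ((yup - y) / (yup - ylo), (yup * x - u) / (yup - ylo)) ∈ perspCone xlo xup :=
    (mk_div_mem_perspCone_iff hx he).2 ⟨by linarith, by linarith⟩
  have hhi : ((y - ylo) / (yup - ylo), (u - ylo * x) / (yup - ylo)) ∈ perspCone xlo xup :=
    (mk_div_mem_perspCone_iff hx he).2 ⟨by linarith, by linarith⟩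
  obtain ⟨x₁, hx₁, hs₁⟩ := exists_mem_Icc_eq_mul_of_mem_perspCone hx.le hlo
  obtain ⟨x₂, hx₂, hs₂⟩ := exists_mem_Icc_eq_mul_of_mem_perspCone hx.le hhi
  have hcomb := convex_convexHull ℝ (graphSet xlo xup ylo yup g)
    (subset_convexHull ℝ _ (mk_mem_graphSet (g := g) hx₁ (left_mem_Icc.2 hy.le)))
    (subset_convexHull ℝ _ (mk_mem_graphSet (g := g) hx₂ (right_mem_Icc.2 hy.le)))
    hlo.1 hhi.1 (by field_simp; ring)
  convert hcomb using 1
  simp only [secantBound, Prod.smul_mk, Prod.mk_add_mk, smul_eq_mul, Prod.mk.injEq]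
  refine ⟨?_, by field_simp; ring, ?_, ?_⟩
  · rw [← hs₁, ← hs₂]; field_simp; ring
  · rw [← mul_assoc, ← mul_assoc, ← hs₁, ← hs₂]; field_simp; ring
  · rw [← mul_assoc, ← mul_assoc, ← hs₁, ← hs₂]; field_simp; ring

lemma envelopeSet_subset_convexHull (hx : xlo < xup) (hy : ylo < yup) :
    envelopeSet xlo xup ylo yup g ⊆ convexHull ℝ (graphSet xlo xup ylo yup g) := by
  intro p hp
  obtain ⟨hlo, hhi, hK⟩ := (mem_envelopeSet_iff hx hy).1 hp
  refine (convex_convexHull ℝ _).segment_subset (perspBound_mem_convexHull hx hy hK)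
    (secantBound_mem_convexHull hx hy hK) ?_
  obtain ⟨a, b, ha, hb, hab, hz⟩ :
      p.2.2.1 ∈ segment ℝ (perspBound xlo xup g p) (secantBound ylo yup g p) := by
    rw [segment_eq_Icc (hlo.trans hhi)]; exact ⟨hlo, hhi⟩
  exact ⟨a, b, ha, hb, hab,
    by simp only [Prod.smul_mk, Prod.mk_add_mk, Convex.combo_self hab, hz]⟩

end Envelope

theorem stmt13_general (xlo xup ylo yup : ℝ) (hx0 : 0 ≤ xlo) (hx : xlo < xup) (hy : ylo < yup)
    (g : ℝ → ℝ)
    (hgconv : ConvexOn ℝ (Set.Icc ylo yup) g) :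
    convexHull ℝ
      {p : ℝ × ℝ × ℝ × ℝ |
        p.1 ∈ Set.Icc xlo xup ∧ p.2.1 ∈ Set.Icc ylo yup ∧
        p.2.2.2 = p.1 * p.2.1 ∧ p.2.2.1 = p.1 * g p.2.1} =
    {p : ℝ × ℝ × ℝ × ℝ |
      xlo * persp g ((xup - p.1) / (xup - xlo)) ((xup * p.2.1 - p.2.2.2) / (xup - xlo)) +
        xup * persp g ((p.1 - xlo) / (xup - xlo)) ((p.2.2.2 - xlo * p.2.1) / (xup - xlo))
        ≤ p.2.2.1 ∧
      p.2.2.1 ≤ g ylo * p.1 + ((g yup - g ylo) / (yup - ylo)) * (p.2.2.2 - ylo * p.1) ∧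
      (xup - p.1) * ylo ≤ xup * p.2.1 - p.2.2.2 ∧
      xup * p.2.1 - p.2.2.2 ≤ (xup - p.1) * yup ∧
      (p.1 - xlo) * ylo ≤ p.2.2.2 - xlo * p.2.1 ∧
      p.2.2.2 - xlo * p.2.1 ≤ (p.1 - xlo) * yup} :=
  (convexHull_min (graphSet_subset_envelopeSet hx0 hx hy hgconv)
    (convex_envelopeSet hx0 hx hy hgconv)).antisymm
    (envelopeSet_subset_convexHull hx hy)

/-- Corollary 9 of the paper: the simultaneous convex hull of `u = x·y` and
`z = x·g(y)` over the box `[xlo, xup] × [ylo, yup]` with `0 ≤ xlo`, for `g` continuous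
and convex on `[ylo, yup]`, in coordinates `p = (x, y, z, u)`. -/
theorem stmt13 (xlo xup ylo yup : ℝ) (hx0 : 0 ≤ xlo) (hx : xlo < xup) (hy : ylo < yup)
    (g : ℝ → ℝ) (hgcont : ContinuousOn g (Set.Icc ylo yup))
    (hgconv : ConvexOn ℝ (Set.Icc ylo yup) g) :
    convexHull ℝ
      {p : ℝ × ℝ × ℝ × ℝ |
        p.1 ∈ Set.Icc xlo xup ∧ p.2.1 ∈ Set.Icc ylo yup ∧
        p.2.2.2 = p.1 * p.2.1 ∧ p.2.2.1 = p.1 * g p.2.1} =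
    {p : ℝ × ℝ × ℝ × ℝ |
      xlo * persp g ((xup - p.1) / (xup - xlo)) ((xup * p.2.1 - p.2.2.2) / (xup - xlo)) +
        xup * persp g ((p.1 - xlo) / (xup - xlo)) ((p.2.2.2 - xlo * p.2.1) / (xup - xlo))
        ≤ p.2.2.1 ∧
      p.2.2.1 ≤ g ylo * p.1 + ((g yup - g ylo) / (yup - ylo)) * (p.2.2.2 - ylo * p.1) ∧
      (xup - p.1) * ylo ≤ xup * p.2.1 - p.2.2.2 ∧
      xup * p.2.1 - p.2.2.2 ≤ (xup - p.1) * yup ∧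
      (p.1 - xlo) * ylo ≤ p.2.2.2 - xlo * p.2.1 ∧
      p.2.2.2 - xlo * p.2.1 ≤ (p.1 - xlo) * yup} :=
  stmt13_general xlo xup ylo yup hx0 hx hy g hgconv
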